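/- arXiv:2006.16715 — 2 statements merged into one kernel-verified Lean document; each statement's English description precedes it below -/
import Mathlib

section
/- Given two choices of data (Ĩ, χ) and (Ĩ′, χ′) with associated calibrations φ and φ′, one has φ(m) − φ′(P_{χ′}⁻¹ P_χ (m)) ∈ ker(h_σ) for every m ∈ ℂ^N. Consequently the subgroups φ(ℤ^N) + ker(h_σ) and φ′(ℤ^N) + ker(h_σ) of ℂ^I coincide (so the induced action on ℂ^I depends only on the cone σ and not on the choice of basis and permutation). -/
/-! Since `P_{χ′} ∘ Q = P_χ`, both `φ m` and `φ′ (Q m)` are preimages of `h (P_χ m)` under `h`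
lying in `ℂ^I`, so they differ by an element of `ker h_σ`. As `Q` permutes the coordinates, it maps
`ℤ^N` onto itself, whence the two cosets of `ker h_σ` agree. -/

open Pointwise

/-- The coordinate subspace `ℂ^I ⊆ ℂ^N`: vectors supported on the index set `I`. -/
noncomputable def coordSubmodule (N : ℕ) (I : Set (Fin N)) : Submodule ℂ (Fin N → ℂ) where
  carrier := {x | ∀ i ∉ I, x i = 0}
  add_mem' := fun ha hb i hi => by simp [Pi.add_apply, ha i hi, hb i hi]
  zero_mem' := fun i _ => rfl
  smul_mem' := fun c x hx i hi => by simp [Pi.smul_apply, hx i hi]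

/-- The integer lattice `ℤ^N` as a subset of `ℂ^N`. -/
def intLattice (N : ℕ) : Set (Fin N → ℂ) :=
  {m | ∀ k, ∃ a : ℤ, m k = (a : ℂ)}

theorem LinearMap.apply_eq_comp_symm_of_map_single {R ι : Type*} [Semiring R] [Finite ι]
    [DecidableEq ι] {Q : (ι → R) →ₗ[R] (ι → R)}
    {σ : Equiv.Perm ι} (hQ : ∀ k, Q (Pi.single k 1) = Pi.single (σ k) 1) (m : ι → R) :
    Q m = m ∘ σ.symm := by
  suffices Q = LinearMap.funLeft R R σ.symm from this ▸ rfl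
  refine (Pi.basisFun R ι).ext fun k => ?_
  ext j
  simp [hQ, LinearMap.funLeft_apply, Pi.single_apply, Equiv.symm_apply_eq]

theorem image_comp_perm_intLattice {N : ℕ} (σ : Equiv.Perm (Fin N)) :
    (fun m => m ∘ σ) '' intLattice N = intLattice N := by
  ext x
  constructor
  · rintro ⟨m, hm, rfl⟩ k
    exact hm (σ k)
  · intro hx
    exact ⟨x ∘ σ.symm, fun k => hx (σ.symm k), by ext; simp⟩

theorem Set.image_add_eq_of_sub_mem {α G S : Type*} [AddCommGroup G] [SetLike S G]
    [AddSubgroupClass S G] (K : S) {f g : α → G} {A : Set α} (hfg : ∀ m ∈ A, f m - g m ∈ K) :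
    f '' A + K = g '' A + K := by
  have key : ∀ {f g : α → G}, (∀ m ∈ A, f m - g m ∈ K) → f '' A + K ⊆ g '' A + K := by
    rintro f g hfg _ ⟨_, ⟨m, hm, rfl⟩, k, hk, rfl⟩
    exact ⟨g m, ⟨m, hm, rfl⟩, f m - g m + k, add_mem (hfg m hm) hk,
      by dsimp only; rw [← add_assoc, add_sub_cancel]⟩
  exact (key hfg).antisymm (key fun m hm => by simpa using neg_mem (hfg m hm))

theorem coordSubmodule_mono {N : ℕ} {I J : Set (Fin N)} (hIJ : I ⊆ J) :
    coordSubmodule N I ≤ coordSubmodule N J :=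
  fun _ hx i hi => hx i (fun hiI => hi (hIJ hiI))

section Sections

variable {R M V : Type*} [Ring R] [AddCommGroup M] [Module R M] [AddCommGroup V] [Module R V]
  {h : M →ₗ[R] V}

theorem LinearEquiv.map_coe_symm_of_eq_restrict {p : Submodule R M} {ψ : p ≃ₗ[R] V}
    (hψ : ∀ x : p, ψ x = h x) (y : V) : h (ψ.symm y) = y := by
  rw [← hψ, ψ.apply_symm_apply]

theorem LinearEquiv.coe_symm_sub_coe_symm_mem_inf_ker {p p' q : Submodule R M} (hp : p ≤ q)
    (hp' : p' ≤ q) {ψ : p ≃ₗ[R] V} {ψ' : p' ≃ₗ[R] V} (hψ : ∀ x : p, ψ x = h x)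
    (hψ' : ∀ x : p', ψ' x = h x) (y : V) :
    (ψ.symm y : M) - ψ'.symm y ∈ q ⊓ LinearMap.ker h := by
  refine ⟨sub_mem (hp (ψ.symm y).2) (hp' (ψ'.symm y).2), ?_⟩
  rw [SetLike.mem_coe, LinearMap.mem_ker, map_sub, map_coe_symm_of_eq_restrict hψ,
    map_coe_symm_of_eq_restrict hψ', sub_self]

end Sections

theorem statement3_general {N d : ℕ}
    (h : (Fin N → ℂ) →ₗ[ℂ] (Fin d → ℂ))
    (I : Set (Fin N))
    -- first choice (Ĩ, χ, ψ, φ)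
    (Itilde : Set (Fin N)) (hII : Itilde ⊆ I)
    (ψ : (coordSubmodule N Itilde) ≃ₗ[ℂ] (Fin d → ℂ))
    (hψ : ∀ x : coordSubmodule N Itilde, ψ x = h (x : Fin N → ℂ))
    (χ : Equiv.Perm (Fin N))
    (P : (Fin N → ℂ) →ₗ[ℂ] (Fin N → ℂ))
    (hP : ∀ k, P (Pi.single k 1) = Pi.single (χ k) 1)
    (φ : (Fin N → ℂ) →ₗ[ℂ] (Fin N → ℂ))
    (hφ : ∀ m, φ m = ((ψ.symm (h (P m)) : coordSubmodule N Itilde) : Fin N → ℂ))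
    -- second choice (Ĩ′, χ′, ψ′, φ′)
    (Itilde' : Set (Fin N)) (hII' : Itilde' ⊆ I)
    (ψ' : (coordSubmodule N Itilde') ≃ₗ[ℂ] (Fin d → ℂ))
    (hψ' : ∀ x : coordSubmodule N Itilde', ψ' x = h (x : Fin N → ℂ))
    (χ' : Equiv.Perm (Fin N))
    (P' : (Fin N → ℂ) →ₗ[ℂ] (Fin N → ℂ))
    (hP' : ∀ k, P' (Pi.single k 1) = Pi.single (χ' k) 1)
    (φ' : (Fin N → ℂ) →ₗ[ℂ] (Fin N → ℂ))
    (hφ' : ∀ m, φ' m = ((ψ'.symm (h (P' m)) : coordSubmodule N Itilde') : Fin N → ℂ))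
    -- Q = P_{χ′}⁻¹ ∘ P_χ, i.e. the linear map e_k ↦ e_{χ′⁻¹(χ k)}
    (Q : (Fin N → ℂ) →ₗ[ℂ] (Fin N → ℂ))
    (hQ : ∀ k, Q (Pi.single k 1) = Pi.single (χ'⁻¹ (χ k)) 1) :
    (∀ m : Fin N → ℂ, φ m - φ' (Q m) ∈ coordSubmodule N I ⊓ LinearMap.ker h) ∧
    (⇑φ '' intLattice N) + ((coordSubmodule N I ⊓ LinearMap.ker h : Submodule ℂ (Fin N → ℂ)) : Set (Fin N → ℂ))
      = (⇑φ' '' intLattice N) + ((coordSubmodule N I ⊓ LinearMap.ker h : Submodule ℂ (Fin N → ℂ)) : Set (Fin N → ℂ)) := by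
  have hQ_apply : ⇑Q = fun m => m ∘ (χ'⁻¹ * χ).symm :=
    funext (LinearMap.apply_eq_comp_symm_of_map_single (σ := χ'⁻¹ * χ) hQ)
  have hP'Q : ∀ m, P' (Q m) = P m := fun m => by
    rw [LinearMap.apply_eq_comp_symm_of_map_single hP',
      LinearMap.apply_eq_comp_symm_of_map_single hP, hQ_apply]
    ext; simp [Equiv.Perm.mul_def, Equiv.Perm.inv_def]
  have hdiff : ∀ m, φ m - φ' (Q m) ∈ coordSubmodule N I ⊓ LinearMap.ker h := fun m => by
    rw [hφ, hφ', hP'Q]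
    exact LinearEquiv.coe_symm_sub_coe_symm_mem_inf_ker (coordSubmodule_mono hII)
      (coordSubmodule_mono hII') hψ hψ' _
  refine ⟨hdiff, ?_⟩
  calc ⇑φ '' intLattice N + _ = (⇑φ' ∘ Q) '' intLattice N + _ :=
        Set.image_add_eq_of_sub_mem _ fun m _ => hdiff m
    _ = _ := by rw [Set.image_comp, hQ_apply, image_comp_perm_intLattice]

/-- Given two choices of data `(Ĩ, χ)` and `(Ĩ′, χ′)` with associated
calibrations `φ` and `φ′`, one has `φ(m) − φ′(P_{χ′}⁻¹ P_χ m) ∈ ker h_σ` for every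
`m ∈ ℂ^N`. Consequently the subgroups `φ(ℤ^N) + ker h_σ` and `φ′(ℤ^N) + ker h_σ` of `ℂ^I`
coincide (so the induced action on `ℂ^I` depends only on `σ`). -/
theorem statement3 {N d : ℕ} (hd : 1 ≤ d) (hdN : d ≤ N)
    (v : Fin N → (Fin d → ℂ)) (hreal : ∀ k i, (v k i).im = 0)
    (h : (Fin N → ℂ) →ₗ[ℂ] (Fin d → ℂ)) (hv : ∀ k, h (Pi.single k 1) = v k)
    (I : Set (Fin N))
    (hsurj : ∀ y : Fin d → ℂ, ∃ x ∈ coordSubmodule N I, h x = y)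
    -- first choice (Ĩ, χ, ψ, φ)
    (Itilde : Set (Fin N)) (hII : Itilde ⊆ I)
    (hli : LinearIndependent ℂ (fun i : Itilde => v i))
    (hspan : Submodule.span ℂ (Set.range (fun i : Itilde => v i)) = ⊤)
    (ψ : (coordSubmodule N Itilde) ≃ₗ[ℂ] (Fin d → ℂ))
    (hψ : ∀ x : coordSubmodule N Itilde, ψ x = h (x : Fin N → ℂ))
    (χ : Equiv.Perm (Fin N)) (hχ : ∀ k : Fin N, (k : ℕ) < d ↔ χ k ∈ Itilde)
    (P : (Fin N → ℂ) →ₗ[ℂ] (Fin N → ℂ))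
    (hP : ∀ k, P (Pi.single k 1) = Pi.single (χ k) 1)
    (φ : (Fin N → ℂ) →ₗ[ℂ] (Fin N → ℂ))
    (hφ : ∀ m, φ m = ((ψ.symm (h (P m)) : coordSubmodule N Itilde) : Fin N → ℂ))
    -- second choice (Ĩ′, χ′, ψ′, φ′)
    (Itilde' : Set (Fin N)) (hII' : Itilde' ⊆ I)
    (hli' : LinearIndependent ℂ (fun i : Itilde' => v i))
    (hspan' : Submodule.span ℂ (Set.range (fun i : Itilde' => v i)) = ⊤)
    (ψ' : (coordSubmodule N Itilde') ≃ₗ[ℂ] (Fin d → ℂ))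
    (hψ' : ∀ x : coordSubmodule N Itilde', ψ' x = h (x : Fin N → ℂ))
    (χ' : Equiv.Perm (Fin N)) (hχ' : ∀ k : Fin N, (k : ℕ) < d ↔ χ' k ∈ Itilde')
    (P' : (Fin N → ℂ) →ₗ[ℂ] (Fin N → ℂ))
    (hP' : ∀ k, P' (Pi.single k 1) = Pi.single (χ' k) 1)
    (φ' : (Fin N → ℂ) →ₗ[ℂ] (Fin N → ℂ))
    (hφ' : ∀ m, φ' m = ((ψ'.symm (h (P' m)) : coordSubmodule N Itilde') : Fin N → ℂ))
    -- Q = P_{χ′}⁻¹ ∘ P_χ, i.e. the linear map e_k ↦ e_{χ′⁻¹(χ k)}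
    (Q : (Fin N → ℂ) →ₗ[ℂ] (Fin N → ℂ))
    (hQ : ∀ k, Q (Pi.single k 1) = Pi.single (χ'⁻¹ (χ k)) 1) :
    (∀ m : Fin N → ℂ, φ m - φ' (Q m) ∈ coordSubmodule N I ⊓ LinearMap.ker h) ∧
    (⇑φ '' intLattice N) + ((coordSubmodule N I ⊓ LinearMap.ker h : Submodule ℂ (Fin N → ℂ)) : Set (Fin N → ℂ))
      = (⇑φ' '' intLattice N) + ((coordSubmodule N I ⊓ LinearMap.ker h : Submodule ℂ (Fin N → ℂ)) : Set (Fin N → ℂ)) :=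
  statement3_general h I Itilde hII ψ hψ χ P hP φ hφ Itilde' hII' ψ' hψ' χ' P' hP' φ' hφ' Q hQ
end

section
/- As subgroups of ℂ^I one has the equality φ(ℤ^N) + ker(h_σ) = h_σ⁻¹(Γ), i.e. the sum of the image of ℤ^N under the calibration φ and the kernel of h_σ is exactly the preimage of Γ under h_σ. -/
open Pointwise

/-! The calibration `φ` agrees with the coordinate permutation `P` modulo `ker h`, i.e.
`h ∘ φ = h ∘ P`, and `P` permutes `ℤ^N`; hence `h (φ (ℤ^N)) = Γ`. Since `φ` lands in `ℂ^I`,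
every `x ∈ h_σ⁻¹(Γ)` with `h x = h (φ m)` splits as `φ m + (x - φ m)` with `x - φ m ∈ ker h_σ`. -/

theorem image_add_inf_ker_eq {R α M M₂ : Type*} [Ring R] [AddCommGroup M] [Module R M]
    [AddCommGroup M₂] [Module R M₂] (h : M →ₗ[R] M₂) (S : Submodule R M) (L : Set α)
    (φ : α → M) (hφS : ∀ m ∈ L, φ m ∈ S) :
    φ '' L + ((S ⊓ LinearMap.ker h : Submodule R M) : Set M)
      = {x | x ∈ S ∧ h x ∈ (fun m => h (φ m)) '' L} := by
  ext x
  constructor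
  · rintro ⟨_, ⟨m, hm, rfl⟩, b, ⟨hbS, hbker⟩, rfl⟩
    rw [SetLike.mem_coe, LinearMap.mem_ker] at hbker
    exact ⟨S.add_mem (hφS m hm) hbS, m, hm, by rw [map_add, hbker, add_zero]⟩
  · rintro ⟨hxS, m, hm, hmx⟩
    refine ⟨φ m, ⟨m, hm, rfl⟩, x - φ m, ⟨S.sub_mem hxS (hφS m hm), ?_⟩, add_sub_cancel _ _⟩
    rw [SetLike.mem_coe, LinearMap.mem_ker, map_sub, ← hmx, sub_self]

theorem LinearMap.eq_funLeft_of_apply_single {R ι : Type*} [Semiring R] [Fintype ι]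
    [DecidableEq ι] (σ : Equiv.Perm ι) (P : (ι → R) →ₗ[R] (ι → R))
    (hP : ∀ k, P (Pi.single k 1) = Pi.single (σ k) 1) :
    P = LinearMap.funLeft R R σ.symm :=
  (Pi.basisFun R ι).ext fun k => by
    ext j
    rw [Pi.basisFun_apply, hP, LinearMap.funLeft_apply, ← Function.comp_apply (f := Pi.single k 1),
      Pi.single_comp_equiv, Equiv.symm_symm]

theorem comp_mem_intLattice {N : ℕ} {m : Fin N → ℂ} (hm : m ∈ intLattice N)
    (σ : Equiv.Perm (Fin N)) :
    m ∘ σ ∈ intLattice N :=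
  fun k => hm (σ k)

theorem image_funLeft_intLattice {N : ℕ} (σ : Equiv.Perm (Fin N)) :
    LinearMap.funLeft ℂ ℂ σ '' intLattice N = intLattice N := by
  refine Set.Subset.antisymm ?_ fun m hm => ⟨m ∘ σ.symm, comp_mem_intLattice hm σ.symm, ?_⟩
  · rintro _ ⟨m, hm, rfl⟩
    exact comp_mem_intLattice hm σ
  · ext k
    simp [LinearMap.funLeft_apply]

theorem statement4_general {N d : ℕ}
    (h : (Fin N → ℂ) →ₗ[ℂ] (Fin d → ℂ))
    (I Itilde : Set (Fin N)) (hII : Itilde ⊆ I)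
    (ψ : (coordSubmodule N Itilde) ≃ₗ[ℂ] (Fin d → ℂ))
    (hψ : ∀ x : coordSubmodule N Itilde, ψ x = h (x : Fin N → ℂ))
    (χ : Equiv.Perm (Fin N))
    (P : (Fin N → ℂ) →ₗ[ℂ] (Fin N → ℂ))
    (hP : ∀ k, P (Pi.single k 1) = Pi.single (χ k) 1)
    (φ : (Fin N → ℂ) →ₗ[ℂ] (Fin N → ℂ))
    (hφ : ∀ m, φ m = ((ψ.symm (h (P m)) : coordSubmodule N Itilde) : Fin N → ℂ)) :
    (⇑φ '' intLattice N) + ((coordSubmodule N I ⊓ LinearMap.ker h : Submodule ℂ (Fin N → ℂ)) : Set (Fin N → ℂ))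
      = {x : Fin N → ℂ | x ∈ coordSubmodule N I ∧ h x ∈ ⇑h '' intLattice N} := by
  have hφI : ∀ m, φ m ∈ coordSubmodule N I := fun m =>
    coordSubmodule_mono hII (hφ m ▸ (ψ.symm (h (P m))).2)
  have hhφ : (fun m => h (φ m)) = h ∘ P := by
    funext m
    rw [Function.comp_apply, hφ, ← hψ, LinearEquiv.apply_symm_apply]
  rw [image_add_inf_ker_eq h _ _ φ fun m _ => hφI m, hhφ, Set.image_comp,
    LinearMap.eq_funLeft_of_apply_single χ P hP, image_funLeft_intLattice]

/-- As subgroups of `ℂ^I` one has `φ(ℤ^N) + ker h_σ = h_σ⁻¹(Γ)`, i.e.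
the sum of the image of `ℤ^N` under the calibration `φ` and the kernel of `h_σ` is
exactly the preimage under `h_σ` of `Γ = h(ℤ^N)`. -/
theorem statement4 {N d : ℕ} (hd : 1 ≤ d) (hdN : d ≤ N)
    (v : Fin N → (Fin d → ℂ)) (hreal : ∀ k i, (v k i).im = 0)
    (h : (Fin N → ℂ) →ₗ[ℂ] (Fin d → ℂ)) (hv : ∀ k, h (Pi.single k 1) = v k)
    (I Itilde : Set (Fin N)) (hII : Itilde ⊆ I)
    (hsurj : ∀ y : Fin d → ℂ, ∃ x ∈ coordSubmodule N I, h x = y)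
    (hli : LinearIndependent ℂ (fun i : Itilde => v i))
    (hspan : Submodule.span ℂ (Set.range (fun i : Itilde => v i)) = ⊤)
    (ψ : (coordSubmodule N Itilde) ≃ₗ[ℂ] (Fin d → ℂ))
    (hψ : ∀ x : coordSubmodule N Itilde, ψ x = h (x : Fin N → ℂ))
    (χ : Equiv.Perm (Fin N)) (hχ : ∀ k : Fin N, (k : ℕ) < d ↔ χ k ∈ Itilde)
    (P : (Fin N → ℂ) →ₗ[ℂ] (Fin N → ℂ))
    (hP : ∀ k, P (Pi.single k 1) = Pi.single (χ k) 1)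
    (φ : (Fin N → ℂ) →ₗ[ℂ] (Fin N → ℂ))
    (hφ : ∀ m, φ m = ((ψ.symm (h (P m)) : coordSubmodule N Itilde) : Fin N → ℂ)) :
    (⇑φ '' intLattice N) + ((coordSubmodule N I ⊓ LinearMap.ker h : Submodule ℂ (Fin N → ℂ)) : Set (Fin N → ℂ))
      = {x : Fin N → ℂ | x ∈ coordSubmodule N I ∧ h x ∈ ⇑h '' intLattice N} :=
  statement4_general h I Itilde hII ψ hψ χ P hP φ hφ
end
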